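/- arXiv:2411.03115 — 2 statements merged into one kernel-verified Lean document; each statement's English description precedes it below -/
import Mathlib

section
/- Let p be prime, F_q of characteristic p, and f a polynomial in F_q[x,y] supported in {x^i y^j : 0 ≤ i,j ≤ p−1} (so f^{p−1} is supported in degrees ≤ (p−1)² which we truncate appropriately). Suppose f = α + βx + γy + δxy with at least two of α,β,γ,δ nonzero, and let A₀ be the number of nonzero coefficients of f^{p−1}. Then the word c_ℓ = f^{p^ℓ−1} satisfies |supp(c_ℓ)| = A₀^ℓ, where |supp| denotes the number of nonzero coefficients. In particular the weight of c_ℓ grows without bound since A₀ ≥ 2. -/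
/-!
Write `c_ℓ = f ^ (p ^ ℓ - 1)` and `g = f ^ (p - 1)`. Then `c_{ℓ+1} = c_ℓ * g ^ (p ^ ℓ)`, and by
Frobenius `g ^ (p ^ ℓ) = ∑ᵥ g_v ^ (p ^ ℓ) X ^ (p ^ ℓ • v)` has one term for each exponent `v` of
`g`. Since `c_ℓ` is supported in the box `[0, p ^ ℓ - 1]²`, its translates by the distinct points
`p ^ ℓ • v` have disjoint supports, so the weight of `c_{ℓ+1}` is the weight of `g` times that of
`c_ℓ`. For `A₀ ≥ 2`: `ℤ²` has the two-unique-sums property, so a power of a polynomial with at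
least two terms still has at least two terms.
-/

/-- Two-variable Laurent polynomial ring `F[x^{±1}, y^{±1}]`. -/
abbrev Laurent2 (F : Type) [Field F] := AddMonoidAlgebra F (Fin 2 →₀ ℤ)

/-- exponent vector of `x` -/
noncomputable def ex : Fin 2 →₀ ℤ := Finsupp.single 0 1
/-- exponent vector of `y` -/
noncomputable def ey : Fin 2 →₀ ℤ := Finsupp.single 1 1

open AddMonoidAlgebra Finset

section Box

variable {R σ : Type*} [Semiring R]

def SupportedInBox (n : ℕ) (g : AddMonoidAlgebra R (σ →₀ ℤ)) : Prop :=
  ∀ v ∈ g.coeff.support, ∀ i, 0 ≤ v i ∧ v i ≤ n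

lemma supportedInBox_single {n : ℕ} {v : σ →₀ ℤ} (hv : ∀ i, 0 ≤ v i ∧ v i ≤ n) (r : R) :
    SupportedInBox n (single v r) := by
  intro w hw
  rw [coeff_single] at hw
  rw [Finset.mem_singleton.mp (Finsupp.support_single_subset hw)]
  exact hv

lemma SupportedInBox.add {n : ℕ} {g h : AddMonoidAlgebra R (σ →₀ ℤ)}
    (hg : SupportedInBox n g) (hh : SupportedInBox n h) : SupportedInBox n (g + h) := by
  classical
  intro v hv
  rw [coeff_add] at hv
  rcases Finset.mem_union.mp (Finsupp.support_add hv) with hv | hv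
  exacts [hg v hv, hh v hv]

lemma SupportedInBox.mul {a b : ℕ} {g h : AddMonoidAlgebra R (σ →₀ ℤ)}
    (hg : SupportedInBox a g) (hh : SupportedInBox b h) : SupportedInBox (a + b) (g * h) := by
  classical
  intro v hv i
  obtain ⟨u, hu, w, hw, rfl⟩ := Finset.mem_add.mp (support_coeff_mul_subset g h hv)
  have := hg u hu i
  have := hh w hw i
  simp only [Finsupp.add_apply]
  omega

lemma SupportedInBox.pow {g : AddMonoidAlgebra R (σ →₀ ℤ)} (hg : SupportedInBox 1 g) (k : ℕ) :
    SupportedInBox k (g ^ k) := by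
  induction k with
  | zero => exact supportedInBox_single (by simp) 1
  | succ k ih => simpa [pow_succ] using ih.mul hg

lemma Int.eq_of_add_mul_eq_add_mul {n a b u v : ℤ} (ha : 0 ≤ a ∧ a ≤ n) (hb : 0 ≤ b ∧ b ≤ n)
    (h : a + (n + 1) * u = b + (n + 1) * v) : u = v := by
  rcases lt_trichotomy u v with huv | huv | huv
  · nlinarith
  · exact huv
  · nlinarith

lemma disjoint_support_mul_single_nsmul {n : ℕ} {c : AddMonoidAlgebra R (σ →₀ ℤ)}
    (hc : SupportedInBox n c) {u v : σ →₀ ℤ} (huv : u ≠ v) (r s : R) :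
    Disjoint (c * single ((n + 1) • u) r).coeff.support
      (c * single ((n + 1) • v) s).coeff.support := by
  classical
  have mem_translate : ∀ {w : σ →₀ ℤ} {t : R} {x}, x ∈ (c * single ((n + 1) • w) t).coeff.support →
      ∃ a ∈ c.coeff.support, x = a + (n + 1) • w := by
    intro w t x hx
    obtain ⟨a, ha, b, hb, rfl⟩ := Finset.mem_add.mp (support_coeff_mul_subset _ _ hx)
    rw [coeff_single] at hb
    exact ⟨a, ha, by rw [Finset.mem_singleton.mp (Finsupp.support_single_subset hb)]⟩
  refine Finset.disjoint_left.mpr fun x hxu hxv => huv ?_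
  obtain ⟨a, ha, rfl⟩ := mem_translate hxu
  obtain ⟨b, hb, hab⟩ := mem_translate hxv
  ext i
  refine Int.eq_of_add_mul_eq_add_mul (hc a ha i) (hc b hb i) ?_
  simpa using congrArg (· i) hab

lemma card_support_mul_sum_single_nsmul [NoZeroDivisors R] {n : ℕ}
    {c : AddMonoidAlgebra R (σ →₀ ℤ)} (hc : SupportedInBox n c) (S : Finset (σ →₀ ℤ))
    (a : (σ →₀ ℤ) → R) (ha : ∀ v ∈ S, a v ≠ 0) :
    #(c * ∑ v ∈ S, single ((n + 1) • v) (a v)).coeff.support = #S * #c.coeff.support := by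
  classical
  have hdisj := fun u v (huv : u ≠ v) => disjoint_support_mul_single_nsmul hc huv (a u) (a v)
  rw [Finset.mul_sum, coeff_sum, Finsupp.support_sum_eq_biUnion S hdisj,
    Finset.card_biUnion fun u _ v _ huv => hdisj u v huv, ← smul_eq_mul, ← Finset.sum_const]
  refine Finset.sum_congr rfl fun v hv => ?_
  rw [support_coeff_mul_single _ _ (fun y => mul_eq_zero_iff_right (ha v hv)), Finset.card_map]

end Box

lemma pow_expChar_pow_eq_sum_single {R M : Type*} [CommSemiring R] [AddCommMonoid M] (p : ℕ)
    [ExpChar R p] (g : AddMonoidAlgebra R M) (k : ℕ) :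
    g ^ p ^ k = ∑ v ∈ g.coeff.support, single (p ^ k • v) (g.coeff v ^ p ^ k) := by
  have : ExpChar (AddMonoidAlgebra R M) p :=
    expChar_of_injective_algebraMap (single_right_injective (M := M) (R := R)) p
  conv_lhs => rw [← sum_coeff_single g, Finsupp.sum, sum_pow_char_pow]
  exact Finset.sum_congr rfl fun v _ => single_pow _ _ _

theorem card_support_pow_expChar_pow_sub_one {R σ : Type*} [CommSemiring R] [NoZeroDivisors R]
    [Nontrivial R] (p : ℕ) [ExpChar R p] {f : AddMonoidAlgebra R (σ →₀ ℤ)}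
    (hf : SupportedInBox 1 f) (ℓ : ℕ) :
    #(f ^ (p ^ ℓ - 1)).coeff.support = #(f ^ (p - 1)).coeff.support ^ ℓ := by
  induction ℓ with
  | zero => simp [one_def]
  | succ ℓ ih =>
    obtain ⟨q, rfl⟩ : ∃ q, p = q + 1 := ⟨p - 1, (Nat.sub_add_cancel (expChar_pos R p)).symm⟩
    rw [Nat.add_sub_cancel] at ih ⊢
    obtain ⟨n, hn⟩ : ∃ n, (q + 1) ^ ℓ = n + 1 :=
      ⟨_, (Nat.sub_add_cancel (Nat.one_le_pow _ _ q.succ_pos)).symm⟩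
    rw [hn, Nat.add_sub_cancel] at ih
    have hexp : (q + 1) ^ (ℓ + 1) - 1 = n + q * (q + 1) ^ ℓ := by
      rw [pow_succ, hn]; ring_nf; omega
    set g := f ^ q
    have hsplit : f ^ ((q + 1) ^ (ℓ + 1) - 1) = f ^ n * ∑ v ∈ g.coeff.support,
        single ((n + 1) • v) (g.coeff v ^ (q + 1) ^ ℓ) := by
      rw [← hn, ← pow_expChar_pow_eq_sum_single, ← pow_mul, ← pow_add, hexp]
    rw [hsplit, card_support_mul_sum_single_nsmul (hf.pow n) _ _
      fun v hv => pow_ne_zero _ (Finsupp.mem_support_iff.mp hv), ih, pow_succ, mul_comm]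

section TwoUniqueSums

variable {R M : Type*} [Semiring R] [NoZeroDivisors R]

lemma two_le_card_support_mul [Add M] [TwoUniqueSums M] {g h : AddMonoidAlgebra R M}
    (hg : 2 ≤ #g.coeff.support) (hh : h ≠ 0) : 2 ≤ #(g * h).coeff.support := by
  have hcard : 1 < #g.coeff.support * #h.coeff.support := by
    have : 1 ≤ #h.coeff.support := Finset.card_pos.mpr (Finsupp.support_nonempty_iff.mpr
      (coeff_eq_zero.not.mpr hh))
    nlinarith
  obtain ⟨p₁, hp₁, p₂, hp₂, hne, hu₁, hu₂⟩ := TwoUniqueSums.uniqueAdd_of_one_lt_card hcard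
  rw [Finset.mem_product] at hp₁ hp₂
  have mem_support : ∀ {q : M × M}, q.1 ∈ g.coeff.support → q.2 ∈ h.coeff.support →
      UniqueAdd g.coeff.support h.coeff.support q.1 q.2 → q.1 + q.2 ∈ (g * h).coeff.support := by
    intro q hq₁ hq₂ hq
    rw [Finsupp.mem_support_iff, coeff_mul_add_of_uniqueAdd hq]
    exact mul_ne_zero (Finsupp.mem_support_iff.mp hq₁) (Finsupp.mem_support_iff.mp hq₂)
  refine Finset.one_lt_card.mpr ⟨_, mem_support hp₁.1 hp₁.2 hu₁, _, mem_support hp₂.1 hp₂.2 hu₂,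
    fun hsum => hne ?_⟩
  obtain ⟨h₁, h₂⟩ := hu₁ hp₂.1 hp₂.2 hsum.symm
  exact Prod.ext h₁.symm h₂.symm

lemma two_le_card_support_pow [AddMonoid M] [TwoUniqueSums M] {g : AddMonoidAlgebra R M}
    (hg : 2 ≤ #g.coeff.support) {k : ℕ} (hk : k ≠ 0) : 2 ≤ #(g ^ k).coeff.support := by
  obtain ⟨k, rfl⟩ := Nat.exists_eq_succ_of_ne_zero hk
  induction k with
  | zero => simpa
  | succ k ih =>
    rw [pow_succ']
    refine two_le_card_support_mul hg fun h0 => ?_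
    simp [h0] at ih

end TwoUniqueSums

lemma length_filter_map_coeff_ne_zero_le {R M : Type*} [Semiring R] [DecidableEq R]
    (g : AddMonoidAlgebra R M) {l : List M} (hl : l.Nodup) :
    ((l.map g.coeff).filter (· ≠ 0)).length ≤ #g.coeff.support := by
  classical
  rw [List.filter_map, List.length_map, ← List.toFinset_card_of_nodup (hl.filter _)]
  refine Finset.card_le_card fun v hv => ?_
  simpa using (List.mem_filter.mp (List.mem_toFinset.mp hv)).2

theorem stmt6_general (F : Type) [Field F] [DecidableEq F]
    (p : ℕ) [Fact p.Prime] [CharP F p]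
    (α β γ δ : F)
    (htwo : 2 ≤ ([α, β, γ, δ].filter (· ≠ 0)).length)
    (f : Laurent2 F)
    (hf : f = AddMonoidAlgebra.single 0 α + AddMonoidAlgebra.single ex β +
      AddMonoidAlgebra.single ey γ + AddMonoidAlgebra.single (ex + ey) δ)
    (A₀ : ℕ) (hA₀ : A₀ = (f ^ (p - 1)).coeff.support.card) (ℓ : ℕ) :
    (f ^ (p ^ ℓ - 1)).coeff.support.card = A₀ ^ ℓ ∧ 2 ≤ A₀ := by
  have hbox : SupportedInBox 1 f := by
    rw [hf]
    refine ((((supportedInBox_single ?_ α).add (supportedInBox_single ?_ β)).add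
      (supportedInBox_single ?_ γ)).add (supportedInBox_single ?_ δ)) <;>
    simp [ex, ey, Fin.forall_fin_two]
  have hcoeffs : [α, β, γ, δ] = [(0 : Fin 2 →₀ ℤ), ex, ey, ex + ey].map f.coeff := by
    subst hf
    simp [ex, ey, Finsupp.single_apply, Finsupp.ext_iff, Fin.forall_fin_two]
  have hnodup : [(0 : Fin 2 →₀ ℤ), ex, ey, ex + ey].Nodup := by
    simp [ex, ey, Finsupp.ext_iff, Fin.forall_fin_two]
  have hf2 : 2 ≤ #f.coeff.support :=
    htwo.trans (hcoeffs ▸ length_filter_map_coeff_ne_zero_le f hnodup)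
  subst hA₀
  exact ⟨card_support_pow_expChar_pow_sub_one p hbox ℓ,
    two_le_card_support_pow hf2 (Nat.sub_ne_zero_of_lt (Fact.out : p.Prime).one_lt)⟩

/-- for `f = α + βx + γy + δxy` with at least two of `α,β,γ,δ` nonzero,
    and `A₀` the number of nonzero coefficients of `f^{p−1}`, the word
    `c_ℓ = f^{p^ℓ−1}` has exactly `A₀^ℓ` nonzero coefficients; moreover `A₀ ≥ 2`,
    so the weight grows without bound. -/
theorem stmt6 (F : Type) [Field F] [Fintype F] [DecidableEq F]
    (p : ℕ) [Fact p.Prime] [CharP F p]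
    (α β γ δ : F)
    (htwo : 2 ≤ ([α, β, γ, δ].filter (· ≠ 0)).length)
    (f : Laurent2 F)
    (hf : f = AddMonoidAlgebra.single 0 α + AddMonoidAlgebra.single ex β +
      AddMonoidAlgebra.single ey γ + AddMonoidAlgebra.single (ex + ey) δ)
    (A₀ : ℕ) (hA₀ : A₀ = (f ^ (p - 1)).coeff.support.card) (ℓ : ℕ) :
    (f ^ (p ^ ℓ - 1)).coeff.support.card = A₀ ^ ℓ ∧ 2 ≤ A₀ :=
  stmt6_general F p α β γ δ htwo f hf A₀ hA₀ ℓ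
end

section
/- In the 2D translation-invariant classical code with m = 1 given by f = α + βx + γy + δxy over a field of characteristic p, there is a walk from 0 to c_ℓ = f^{p^ℓ−1} (flipping one coefficient at a time) whose maximum energy along the walk is at most 4·A₀·ℓ, where A₀ is the number of nonzero coefficients of f^{p−1}; i.e., the energy barrier to reach c_ℓ is O(log|c_ℓ|). -/
/-!
Since `f · c_ℓ = f ^ p ^ ℓ` and Frobenius does not increase the number of monomials, a complete
copy of `c_ℓ` has energy at most `#supp f ≤ 4`. Write `c_{ℓ+1} = h · c_ℓ`, where
`h = (f ^ (p - 1)) ^ p ^ ℓ` is a sum of at most `A₀` monomials `m`. The walk to `c_{ℓ+1}` builds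
the copies `m · c_ℓ` one after another, each along a scaled copy of the walk to `c_ℓ`; at any time
the energy is at most `4` per completed copy plus the energy of the copy in progress, so each
level adds at most `4 · A₀`.
-/

open AddMonoidAlgebra Finset

theorem sum_map_const_mul {R : Type*} [NonUnitalNonAssocSemiring R] (m : R) (l : List R) :
    (l.map (m * ·)).sum = m * l.sum := by
  simpa using List.sum_map_mul_left l id m

section Support

variable {k G : Type*}

theorem card_support_add_le [Semiring k] (x y : k[G]) :
    #(x + y).coeff.support ≤ #x.coeff.support + #y.coeff.support := by
  classical
  rw [coeff_add]
  exact (card_le_card Finsupp.support_add).trans (card_union_le _ _)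

theorem card_support_single_le [Semiring k] (a : G) (r : k) : #(single a r).coeff.support ≤ 1 := by
  rw [coeff_single]
  exact (card_le_card Finsupp.support_single_subset).trans_eq (card_singleton a)

theorem card_support_mul_le [Semiring k] [Add G] (x y : k[G]) :
    #(x * y).coeff.support ≤ #x.coeff.support * #y.coeff.support := by
  classical
  exact (card_le_card (support_coeff_mul_subset x y)).trans card_add_le

theorem card_support_list_sum_le [Semiring k] (l : List k[G])
    (hl : ∀ x ∈ l, #x.coeff.support ≤ 1) : #l.sum.coeff.support ≤ l.length := by
  induction l with
  | nil => simp
  | cons x l ih =>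
    rw [List.forall_mem_cons] at hl
    rw [List.sum_cons, List.length_cons]
    exact (card_support_add_le _ _).trans ((add_le_add hl.1 (ih hl.2)).trans_eq (add_comm _ _))

theorem card_support_mul_eq_one [Semiring k] [NoZeroDivisors k] [Add G] {x y : k[G]}
    (hx : #x.coeff.support = 1) (hy : #y.coeff.support = 1) : #(x * y).coeff.support = 1 := by
  obtain ⟨a, ha, hxa⟩ := Finsupp.card_support_eq_one.1 hx
  obtain ⟨b, hb, hyb⟩ := Finsupp.card_support_eq_one.1 hy
  rw [show x = single a (x.coeff a) from coeff_injective hxa,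
    show y = single b (y.coeff b) from coeff_injective hyb, single_mul_single, coeff_single,
    Finsupp.support_single _ (mul_ne_zero ha hb), card_singleton]

theorem card_support_pow_expChar_pow_le [CommSemiring k] [AddCommMonoid G] (p : ℕ) [ExpChar k p]
    (x : k[G]) (n : ℕ) : #(x ^ p ^ n).coeff.support ≤ #x.coeff.support := by
  classical
  have : ExpChar k[G] p :=
    expChar_of_injective_algebraMap (FaithfulSMul.algebraMap_injective k k[G]) p
  have hsub : (x ^ p ^ n).coeff.support ⊆ x.coeff.support.image (p ^ n • ·) := by
    conv_lhs => rw [← sum_coeff_single x]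
    rw [Finsupp.sum, sum_pow_char_pow, coeff_sum]
    refine Finsupp.support_finsetSum.trans (biUnion_subset.2 fun a ha => ?_)
    rw [single_pow, coeff_single]
    exact Finsupp.support_single_subset.trans (singleton_subset_iff.2 (mem_image_of_mem _ ha))
  exact (card_le_card hsub).trans card_image_le

noncomputable def monomials [Semiring k] (x : k[G]) : List k[G] :=
  x.coeff.support.toList.map fun a => single a (x.coeff a)

theorem sum_monomials [Semiring k] (x : k[G]) : (monomials x).sum = x := by
  rw [monomials, sum_map_toList]
  exact sum_coeff_single x

theorem length_monomials [Semiring k] (x : k[G]) : (monomials x).length = #x.coeff.support := by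
  simp [monomials]

theorem card_support_of_mem_monomials [Semiring k] {x m : k[G]} (hm : m ∈ monomials x) :
    #m.coeff.support = 1 := by
  obtain ⟨a, ha, rfl⟩ := List.mem_map.1 hm
  rw [coeff_single, Finsupp.support_single _ (Finsupp.mem_support_iff.1 (mem_toList.1 ha)),
    card_singleton]

end Support

section Energy

variable {k G : Type*} [CommSemiring k] [AddCommMonoid G]

noncomputable def energy (f v : k[G]) : ℕ := #(f * v).coeff.support

theorem energy_add_le (f u v : k[G]) : energy f (u + v) ≤ energy f u + energy f v := by
  rw [energy, mul_add]
  exact card_support_add_le _ _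

theorem energy_mul_le (f u v : k[G]) : energy f (u * v) ≤ #u.coeff.support * energy f v := by
  rw [energy, mul_left_comm]
  exact card_support_mul_le _ _

noncomputable def scaledCopies (M D : List k[G]) : List k[G] := M.flatMap fun m => D.map (m * ·)

theorem sum_scaledCopies (M D : List k[G]) : (scaledCopies M D).sum = M.sum * D.sum := by
  induction M with
  | nil => simp [scaledCopies]
  | cons m M ih =>
    rw [scaledCopies, List.flatMap_cons, List.sum_append, ← scaledCopies, ih, sum_map_const_mul,
      List.sum_cons, add_mul]

theorem card_support_of_mem_scaledCopies [NoZeroDivisors k] {M D : List k[G]}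
    (hM : ∀ m ∈ M, #m.coeff.support = 1) (hD : ∀ d ∈ D, #d.coeff.support = 1) :
    ∀ x ∈ scaledCopies M D, #x.coeff.support = 1 := by
  intro x hx
  obtain ⟨m, hm, hx⟩ := List.mem_flatMap.1 hx
  obtain ⟨d, hd, rfl⟩ := List.mem_map.1 hx
  exact card_support_mul_eq_one (hM m hm) (hD d hd)

theorem energy_sum_take_scaledCopies_le {f : k[G]} {M D : List k[G]} {B C : ℕ}
    (hM : ∀ m ∈ M, #m.coeff.support ≤ 1) (hD : ∀ n, energy f (D.take n).sum ≤ B)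
    (hC : energy f D.sum ≤ C) (n : ℕ) :
    energy f ((scaledCopies M D).take n).sum ≤ C * M.length + B := by
  induction M using List.reverseRecOn generalizing n with
  | nil => simp [scaledCopies, energy]
  | append_singleton M m ih =>
    simp only [List.mem_append, List.mem_singleton] at hM
    rw [scaledCopies, List.flatMap_append, List.flatMap_singleton, List.take_append,
      List.sum_append, ← scaledCopies, List.length_append, List.length_singleton]
    rcases le_or_gt n (scaledCopies M D).length with hn | hn
    · rw [Nat.sub_eq_zero_of_le hn, List.take_zero, List.sum_nil, add_zero]
      exact (ih (fun m hm => hM m (Or.inl hm)) n).trans (by gcongr; omega)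
    · rw [List.take_of_length_le hn.le, sum_scaledCopies, ← List.map_take, sum_map_const_mul]
      calc _ ≤ #M.sum.coeff.support * energy f D.sum + #m.coeff.support * energy f (D.take _).sum :=
            (energy_add_le _ _ _).trans (add_le_add (energy_mul_le _ _ _) (energy_mul_le _ _ _))
        _ ≤ M.length * C + 1 * B := by
          gcongr
          · exact card_support_list_sum_le M fun m hm => hM m (Or.inl hm)
          · exact hM m (Or.inr rfl)
          · exact hD _
        _ ≤ C * (M.length + 1) + B := by linarith

end Energy

theorem pow_sub_one_pow_mul_pow_sub_one {M : Type*} [Monoid M] (x : M) {p : ℕ} (hp : 0 < p)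
    (ℓ : ℕ) : (x ^ (p - 1)) ^ p ^ ℓ * x ^ (p ^ ℓ - 1) = x ^ (p ^ (ℓ + 1) - 1) := by
  rw [← pow_mul, ← pow_add, pow_succ', Nat.sub_one_mul]
  have : 0 < p ^ ℓ := pow_pos hp ℓ
  have : p ^ ℓ ≤ p * p ^ ℓ := Nat.le_mul_of_pos_left _ hp
  congr 1
  omega

theorem exists_steps_to_pow_expChar_pow_sub_one {k G : Type*} [CommSemiring k] [NoZeroDivisors k]
    [AddCommMonoid G] (p : ℕ) [ExpChar k p] (f : k[G]) {ℓ : ℕ} (hℓ : 1 ≤ ℓ) :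
    ∃ D : List k[G], (∀ d ∈ D, #d.coeff.support = 1) ∧ D.sum = f ^ (p ^ ℓ - 1) ∧
      ∀ n, energy f (D.take n).sum ≤ #f.coeff.support * #(f ^ (p - 1)).coeff.support * ℓ := by
  set C := #f.coeff.support
  set A := #(f ^ (p - 1)).coeff.support
  induction ℓ, hℓ using Nat.le_induction with
  | base =>
    refine ⟨monomials (f ^ (p - 1)), fun d => card_support_of_mem_monomials,
      by rw [pow_one, sum_monomials], fun n => ?_⟩
    have hprefix : #((monomials (f ^ (p - 1))).take n).sum.coeff.support ≤ A :=
      (card_support_list_sum_le _ fun m hm =>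
        (card_support_of_mem_monomials (List.mem_of_mem_take hm)).le).trans
        ((List.length_take_le' _ _).trans (length_monomials _).le)
    calc _ ≤ C * #((monomials (f ^ (p - 1))).take n).sum.coeff.support := card_support_mul_le _ _
      _ ≤ C * A * 1 := by rw [mul_one]; gcongr
  | succ ℓ _ ih =>
    obtain ⟨D, hD, hDsum, hDenergy⟩ := ih
    set M := monomials ((f ^ (p - 1)) ^ p ^ ℓ)
    have hC : energy f D.sum ≤ C := by
      rw [hDsum, energy, ← pow_succ', Nat.sub_add_cancel (expChar_pow_pos k p ℓ)]
      exact card_support_pow_expChar_pow_le p f ℓ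
    have hM : M.length ≤ A := (length_monomials _).trans_le (card_support_pow_expChar_pow_le p _ ℓ)
    refine ⟨scaledCopies M D, card_support_of_mem_scaledCopies
      (fun m => card_support_of_mem_monomials) hD, ?_, fun n => ?_⟩
    · rw [sum_scaledCopies, sum_monomials, hDsum,
        pow_sub_one_pow_mul_pow_sub_one f (expChar_pos k p)]
    · calc _ ≤ C * M.length + C * A * ℓ := energy_sum_take_scaledCopies_le
            (fun m hm => (card_support_of_mem_monomials hm).le) hDenergy hC n
        _ ≤ C * A + C * A * ℓ := by gcongr
        _ = C * A * (ℓ + 1) := by ring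

theorem exists_walk_of_steps {k G : Type*} [Ring k] (D : List k[G])
    (hD : ∀ d ∈ D, #d.coeff.support = 1) :
    ∃ walk : List k[G], walk.head? = some 0 ∧ walk.getLast? = some D.sum ∧
      (∀ i : ℕ, (h : i + 1 < walk.length) →
        #(walk.get ⟨i, by omega⟩ - walk.get ⟨i + 1, h⟩).coeff.support = 1) ∧
      ∀ v ∈ walk, ∃ n, v = (D.take n).sum := by
  have hget : ∀ i (h : i < (D.scanl (· + ·) 0).length),
      (D.scanl (· + ·) 0).get ⟨i, h⟩ = (D.take i).sum :=
    fun i h => by rw [List.get_eq_getElem, List.getElem_scanl, List.sum_eq_foldl]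
  refine ⟨D.scanl (· + ·) 0, List.head?_scanl, ?_, fun i h => ?_, fun v hv => ?_⟩
  · rw [List.getLast?_eq_some_getLast (by simp), List.getLast_scanl, List.sum_eq_foldl]
  · rw [List.length_scanl] at h
    rw [hget, hget, List.sum_take_succ _ _ (by omega), sub_add_cancel_left, coeff_neg,
      Finsupp.support_neg]
    exact hD _ (List.getElem_mem _)
  · obtain ⟨i, hi, rfl⟩ := List.mem_iff_getElem.1 hv
    exact ⟨i, hget i hi⟩

/-- in the `m = 1` 2D translation-invariant classical code given by
    `f = α + βx + γy + δxy` over a field of characteristic `p`, there is a walk from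
    `0` to `c_ℓ = f^{p^ℓ−1}` flipping one coefficient at a time whose maximum energy
    (number of nonzero coefficients of `f·v`) is at most `4·A₀·ℓ`, where `A₀` is the
    number of nonzero coefficients of `f^{p−1}`. -/
theorem stmt19 (F : Type) [Field F] (p : ℕ) [Fact p.Prime] [CharP F p]
    (α β γ δ : F)
    (f : Laurent2 F)
    (hf : f = AddMonoidAlgebra.single 0 α + AddMonoidAlgebra.single ex β +
      AddMonoidAlgebra.single ey γ + AddMonoidAlgebra.single (ex + ey) δ)
    (A₀ : ℕ) (hA₀ : A₀ = (f ^ (p - 1)).coeff.support.card)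
    (ℓ : ℕ) (hℓ : 1 ≤ ℓ) :
    ∃ walk : List (Laurent2 F),
      walk.head? = some 0 ∧
      walk.getLast? = some (f ^ (p ^ ℓ - 1)) ∧
      (∀ i : ℕ, (h : i + 1 < walk.length) →
        ((walk.get ⟨i, by omega⟩) - walk.get ⟨i + 1, h⟩).coeff.support.card = 1) ∧
      (∀ v ∈ walk, (f * v).coeff.support.card ≤ 4 * A₀ * ℓ) := by
  have hf4 : #f.coeff.support ≤ 4 := by
    have hf_list : f = [single 0 α, single ex β, single ey γ, single (ex + ey) δ].sum := by
      simp [hf, add_assoc]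
    rw [hf_list]
    exact card_support_list_sum_le _ (by simp [card_support_single_le, -coeff_single])
  obtain ⟨D, hD, hDsum, hDenergy⟩ := exists_steps_to_pow_expChar_pow_sub_one p f hℓ
  obtain ⟨walk, hhead, hlast, hsteps, hmem⟩ := exists_walk_of_steps D hD
  refine ⟨walk, hhead, hDsum ▸ hlast, hsteps, fun v hv => ?_⟩
  obtain ⟨n, rfl⟩ := hmem v hv
  calc _ ≤ #f.coeff.support * A₀ * ℓ := hA₀ ▸ hDenergy n
    _ ≤ 4 * A₀ * ℓ := by gcongr
end
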